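/- Let Ω = [0,L₁]×[0,L₂] with periodic boundary conditions, let V₀ be a set of smooth Ω-periodic scalar functions and V₁ a set of smooth Ω-periodic vector fields with ∇⊥γ ∈ V₁ for all γ ∈ V₀. Let f be smooth, Ω-periodic and time-independent and g a constant. Suppose u(t) , h(t), F(t), q(t) are smooth Ω-periodic fields depending smoothly on t such that for all t: (i) ∫_Ω γ q h dx = −∫_Ω ∇⊥γ·u dx + ∫_Ω γ f dx for all γ ∈ V₀, and (ii) ∫_Ω w·u_t dx + ∫_Ω q w·F⊥ dx − ∫_Ω (∇·w)(gh + ½|u|²) dx = 0 for all w ∈ V₁. Then for all γ ∈ V₀ and all t: ∫_Ω γ ((qh)_t + ∇·(qF)) dx = 0; i.e., the discretisation satisfies a consistent potential vorticity conservation law, namely the Galerkin projection of (qh)_t + ∇·(qhu) = 0 onto V₀. -/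

import Mathlib

open MeasureTheory

/-- Partial derivative in the `x`-direction of a planar scalar field. -/
noncomputable def pdx (f : ℝ × ℝ → ℝ) (p : ℝ × ℝ) : ℝ :=
  fderiv ℝ f p (1, 0)

/-- Partial derivative in the `y`-direction of a planar scalar field. -/
noncomputable def pdy (f : ℝ × ℝ → ℝ) (p : ℝ × ℝ) : ℝ :=
  fderiv ℝ f p (0, 1)

/-- The divergence `∇·w = ∂w₁/∂x + ∂w₂/∂y` of a planar vector field. -/
noncomputable def div2 (w : ℝ × ℝ → ℝ × ℝ) (p : ℝ × ℝ) : ℝ :=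
  fderiv ℝ (fun q => (w q).1) p (1, 0) + fderiv ℝ (fun q => (w q).2) p (0, 1)

/-- The perpendicular gradient `∇⊥γ = (-γ_y, γ_x)`. -/
noncomputable def perpGrad (γ : ℝ × ℝ → ℝ) : ℝ × ℝ → ℝ × ℝ :=
  fun p => (-(pdy γ p), pdx γ p)

/-- Periodicity with periods `L₁` and `L₂` in the two coordinate directions. -/
def Per2 {α : Type*} (L₁ L₂ : ℝ) (f : ℝ × ℝ → α) : Prop :=
  ∀ p : ℝ × ℝ, f (p.1 + L₁, p.2) = f p ∧ f (p.1, p.2 + L₂) = f p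

set_option linter.unusedVariables false

lemma slice_t {G : ℝ × (ℝ × ℝ) → ℝ} (hG : Differentiable ℝ G) (t : ℝ) (p : ℝ × ℝ) :
    HasDerivAt (fun s => G (s, p)) (fderiv ℝ G (t, p) (1, 0)) t := by
  have h1 : HasDerivAt (fun s : ℝ => (s, p)) (1, (0 : ℝ × ℝ)) t :=
    (hasDerivAt_id t).prodMk (hasDerivAt_const t p)
  simpa [Function.comp_def] using (hG (t, p)).hasFDerivAt.comp_hasDerivAt t h1

lemma slice_x {ρ : ℝ × ℝ → ℝ} (hρ : Differentiable ℝ ρ) (x y : ℝ) :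
    HasDerivAt (fun s => ρ (s, y)) (pdx ρ (x, y)) x := by
  have h1 : HasDerivAt (fun s : ℝ => (s, y)) ((1 : ℝ), (0 : ℝ)) x :=
    (hasDerivAt_id x).prodMk (hasDerivAt_const x y)
  simpa [pdx, Function.comp_def] using (hρ (x, y)).hasFDerivAt.comp_hasDerivAt x h1

lemma slice_y {ρ : ℝ × ℝ → ℝ} (hρ : Differentiable ℝ ρ) (x y : ℝ) :
    HasDerivAt (fun s => ρ (x, s)) (pdy ρ (x, y)) y := by
  have h1 : HasDerivAt (fun s : ℝ => (x, s)) ((0 : ℝ), (1 : ℝ)) y :=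
    (hasDerivAt_const y x).prodMk (hasDerivAt_id y)
  simpa [pdy, Function.comp_def] using (hρ (x, y)).hasFDerivAt.comp_hasDerivAt y h1

lemma fderiv_shift {f : ℝ × ℝ → ℝ} (hf : Differentiable ℝ f) (c x : ℝ × ℝ) :
    fderiv ℝ (fun r => f (r + c)) x = fderiv ℝ f (x + c) := by
  have : HasFDerivAt (fun r => f (r + c)) (fderiv ℝ f (x + c)) x := by
    simpa [Function.comp_def] using (hf (x + c)).hasFDerivAt.comp x ((hasFDerivAt_id x).add_const c)
  exact this.fderiv

lemma per_fderiv {L₁ L₂ : ℝ} {f : ℝ × ℝ → ℝ} (hf : Differentiable ℝ f)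
    (hper : Per2 L₁ L₂ f) (v : ℝ × ℝ) :
    Per2 L₁ L₂ (fun p => fderiv ℝ f p v) := by
  intro p
  have e1 : (fun r : ℝ × ℝ => f (r + (L₁, 0))) = f := by
    funext r
    have h2 : r + (L₁, 0) = (r.1 + L₁, r.2) := by ext <;> simp
    rw [h2, (hper r).1]
  have e2 : (fun r : ℝ × ℝ => f (r + (0, L₂))) = f := by
    funext r
    have h2 : r + (0, L₂) = (r.1, r.2 + L₂) := by ext <;> simp
    rw [h2, (hper r).2]
  constructor
  · have h2 : (p.1 + L₁, p.2) = p + (L₁, 0) := by ext <;> simp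
    show fderiv ℝ f (p.1 + L₁, p.2) v = fderiv ℝ f p v
    rw [h2, ← fderiv_shift hf (L₁, 0) p, e1]
  · have h2 : (p.1, p.2 + L₂) = p + (0, L₂) := by ext <;> simp
    show fderiv ℝ f (p.1, p.2 + L₂) v = fderiv ℝ f p v
    rw [h2, ← fderiv_shift hf (0, L₂) p, e2]

lemma cont_pdv {f : ℝ × ℝ → ℝ} (hf : ContDiff ℝ (⊤ : ℕ∞) f) (v : ℝ × ℝ) :
    Continuous (fun p => fderiv ℝ f p v) :=
  (hf.continuous_fderiv (by simp)).clm_apply continuous_const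

lemma integral_pdx_zero {L₁ L₂ : ℝ} (hL₁ : 0 < L₁) (hL₂ : 0 < L₂)
    {ρ : ℝ × ℝ → ℝ} (hρ : ContDiff ℝ (⊤ : ℕ∞) ρ) (hper : Per2 L₁ L₂ ρ) :
    ∫ p in Set.Icc (0:ℝ) L₁ ×ˢ Set.Icc (0:ℝ) L₂, pdx ρ p = 0 := by
  have hcont : Continuous (pdx ρ) := cont_pdv hρ (1, 0)
  have hK : IsCompact (Set.Icc (0:ℝ) L₁ ×ˢ Set.Icc (0:ℝ) L₂) :=
    isCompact_Icc.prod isCompact_Icc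
  have hint : IntegrableOn (pdx ρ) (Set.Icc (0:ℝ) L₁ ×ˢ Set.Icc (0:ℝ) L₂) :=
    hcont.continuousOn.integrableOn_compact hK
  rw [show (volume : Measure (ℝ × ℝ)) = (volume : Measure ℝ).prod volume from Measure.volume_eq_prod ℝ ℝ] at hint ⊢
  rw [setIntegral_prod _ hint]
  have hswap : ∫ x in Set.Icc (0:ℝ) L₁, ∫ y in Set.Icc (0:ℝ) L₂, pdx ρ (x, y)
      = ∫ y in Set.Icc (0:ℝ) L₂, ∫ x in Set.Icc (0:ℝ) L₁, pdx ρ (x, y) := by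
    apply integral_integral_swap
    rw [Function.uncurry_def]
    rw [show ((volume : Measure ℝ).restrict (Set.Icc (0:ℝ) L₁)).prod
        ((volume : Measure ℝ).restrict (Set.Icc (0:ℝ) L₂)) =
        ((volume : Measure ℝ).prod volume).restrict
          (Set.Icc (0:ℝ) L₁ ×ˢ Set.Icc (0:ℝ) L₂) from Measure.prod_restrict _ _]
    exact hint
  rw [hswap]
  have hinner : ∀ y : ℝ, ∫ x in Set.Icc (0:ℝ) L₁, pdx ρ (x, y) = 0 := by
    intro y
    rw [MeasureTheory.integral_Icc_eq_integral_Ioc,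
      ← intervalIntegral.integral_of_le hL₁.le]
    have hftc : ∫ x in (0:ℝ)..L₁, pdx ρ (x, y) = ρ (L₁, y) - ρ (0, y) := by
      apply intervalIntegral.integral_eq_sub_of_hasDerivAt
      · intro x _
        exact slice_x (hρ.differentiable (by simp)) x y
      · exact (hcont.comp (continuous_id.prodMk continuous_const)).intervalIntegrable 0 L₁
    rw [hftc]
    have := (hper (0, y)).1
    simp only [zero_add] at this
    rw [this]; ring
  simp [hinner]

lemma integral_pdy_zero {L₁ L₂ : ℝ} (hL₁ : 0 < L₁) (hL₂ : 0 < L₂)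
    {ρ : ℝ × ℝ → ℝ} (hρ : ContDiff ℝ (⊤ : ℕ∞) ρ) (hper : Per2 L₁ L₂ ρ) :
    ∫ p in Set.Icc (0:ℝ) L₁ ×ˢ Set.Icc (0:ℝ) L₂, pdy ρ p = 0 := by
  have hcont : Continuous (pdy ρ) := cont_pdv hρ (0, 1)
  have hK : IsCompact (Set.Icc (0:ℝ) L₁ ×ˢ Set.Icc (0:ℝ) L₂) :=
    isCompact_Icc.prod isCompact_Icc
  have hint : IntegrableOn (pdy ρ) (Set.Icc (0:ℝ) L₁ ×ˢ Set.Icc (0:ℝ) L₂) :=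
    hcont.continuousOn.integrableOn_compact hK
  rw [show (volume : Measure (ℝ × ℝ)) = (volume : Measure ℝ).prod volume from Measure.volume_eq_prod ℝ ℝ] at hint ⊢
  rw [setIntegral_prod _ hint]
  have hinner : ∀ x : ℝ, ∫ y in Set.Icc (0:ℝ) L₂, pdy ρ (x, y) = 0 := by
    intro x
    rw [MeasureTheory.integral_Icc_eq_integral_Ioc,
      ← intervalIntegral.integral_of_le hL₂.le]
    have hftc : ∫ y in (0:ℝ)..L₂, pdy ρ (x, y) = ρ (x, L₂) - ρ (x, 0) := by
      apply intervalIntegral.integral_eq_sub_of_hasDerivAt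
      · intro y _
        exact slice_y (hρ.differentiable (by simp)) x y
      · exact (hcont.comp (continuous_const.prodMk continuous_id)).intervalIntegrable 0 L₂
    rw [hftc]
    have := (hper (x, 0)).2
    simp only [zero_add] at this
    rw [this]; ring
  simp [hinner]

lemma hasDerivAt_intK {K : Set (ℝ × ℝ)} (hK : IsCompact K)
    {G : ℝ × (ℝ × ℝ) → ℝ} (hG : ContDiff ℝ (⊤ : ℕ∞) G) (t₀ : ℝ) :
    HasDerivAt (fun t => ∫ p in K, G (t, p))
      (∫ p in K, fderiv ℝ G ((t₀, p) : ℝ × (ℝ × ℝ)) (1, 0)) t₀ := by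
  have hGt : Continuous (fun z : ℝ × (ℝ × ℝ) => fderiv ℝ G z (1, 0)) :=
    (hG.continuous_fderiv (by simp)).clm_apply continuous_const
  have hB : IsCompact (Set.Icc (t₀ - 1) (t₀ + 1) ×ˢ K) := isCompact_Icc.prod hK
  obtain ⟨C, hC⟩ := hB.exists_bound_of_continuousOn hGt.continuousOn
  have hKm : MeasurableSet K := hK.measurableSet
  refine (hasDerivAt_integral_of_dominated_loc_of_deriv_le
    (μ := volume.restrict K) (F := fun t p => G (t, p))
    (F' := fun t p => fderiv ℝ G ((t, p) : ℝ × (ℝ × ℝ)) (1, 0))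
    (bound := fun _ => C) (Metric.ball_mem_nhds t₀ one_pos) ?_ ?_ ?_ ?_ ?_ ?_).2
  · exact Filter.Eventually.of_forall fun t =>
      (hG.continuous.comp (Continuous.prodMk_right t)).aestronglyMeasurable
  · exact (hG.continuous.comp (Continuous.prodMk_right t₀)).continuousOn.integrableOn_compact hK
  · exact (hGt.comp (Continuous.prodMk_right t₀)).aestronglyMeasurable
  · filter_upwards [ae_restrict_mem hKm] with p hp
    intro t ht
    refine hC _ ⟨?_, hp⟩
    have := Real.ball_eq_Ioo t₀ 1 ▸ ht
    exact Set.Ioo_subset_Icc_self this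
  · exact (integrableOn_const hK.measure_lt_top.ne)
  · exact Filter.Eventually.of_forall fun p t _ =>
      slice_t (hG.differentiable (by simp)) t p

lemma pdx_mul {a b : ℝ × ℝ → ℝ} (ha : Differentiable ℝ a) (hb : Differentiable ℝ b)
    (p : ℝ × ℝ) :
    pdx (fun r => a r * b r) p = pdx a p * b p + a p * pdx b p := by
  have h := fderiv_fun_mul (ha p) (hb p)
  simp only [pdx, h, ContinuousLinearMap.add_apply, ContinuousLinearMap.smul_apply,
    smul_eq_mul]
  ring

lemma pdy_mul {a b : ℝ × ℝ → ℝ} (ha : Differentiable ℝ a) (hb : Differentiable ℝ b)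
    (p : ℝ × ℝ) :
    pdy (fun r => a r * b r) p = pdy a p * b p + a p * pdy b p := by
  have h := fderiv_fun_mul (ha p) (hb p)
  simp only [pdy, h, ContinuousLinearMap.add_apply, ContinuousLinearMap.smul_apply,
    smul_eq_mul]
  ring

lemma fderiv_pdv {γ : ℝ × ℝ → ℝ} (hγ : ContDiff ℝ (⊤ : ℕ∞) γ) (v w p : ℝ × ℝ) :
    fderiv ℝ (fun r => fderiv ℝ γ r v) p w = fderiv ℝ (fderiv ℝ γ) p w v := by
  have hH : Differentiable ℝ (fderiv ℝ γ) :=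
    (hγ.fderiv_right (m := (⊤ : ℕ∞)) (by simp)).differentiable (by simp)
  have h1 : fderiv ℝ (fun r => fderiv ℝ γ r v) p =
      (fderiv ℝ γ p).comp (fderiv ℝ (fun _ : ℝ × ℝ => v) p) +
        (fderiv ℝ (fderiv ℝ γ) p).flip v :=
    fderiv_clm_apply (hH p) (differentiableAt_const v)
  simp [h1]

lemma div2_perpGrad {γ : ℝ × ℝ → ℝ} (hγ : ContDiff ℝ (⊤ : ℕ∞) γ) (p : ℝ × ℝ) :
    div2 (perpGrad γ) p = 0 := by
  have hH : Differentiable ℝ (fderiv ℝ γ) :=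
    (hγ.fderiv_right (m := (⊤ : ℕ∞)) (by simp)).differentiable (by simp)
  have hsymm := second_derivative_symmetric
    (fun y => ((hγ.differentiable (by simp)) y).hasFDerivAt) (hH p).hasFDerivAt
    ((1 : ℝ), (0 : ℝ)) ((0 : ℝ), (1 : ℝ))
  have hd1 : Differentiable ℝ (fun r => fderiv ℝ γ r ((0 : ℝ), (1 : ℝ))) := by
    intro r
    exact ((hH r).clm_apply (differentiableAt_const _))
  have e1 : fderiv ℝ (fun r => (perpGrad γ r).1) p (1, 0) =
      -(fderiv ℝ (fderiv ℝ γ) p (1, 0) (0, 1)) := by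
    have : (fun r => (perpGrad γ r).1) = fun r => -(fderiv ℝ γ r ((0:ℝ), (1:ℝ))) := rfl
    rw [this, fderiv_fun_neg]
    simp [fderiv_pdv hγ ((0:ℝ),(1:ℝ)) ((1:ℝ),(0:ℝ)) p]
  have e2 : fderiv ℝ (fun r => (perpGrad γ r).2) p (0, 1) =
      fderiv ℝ (fderiv ℝ γ) p (0, 1) (1, 0) := by
    have : (fun r => (perpGrad γ r).2) = fun r => fderiv ℝ γ r ((1:ℝ), (0:ℝ)) := rfl
    rw [this]
    exact fderiv_pdv hγ ((1:ℝ),(0:ℝ)) ((0:ℝ),(1:ℝ)) p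
  simp only [div2, e1, e2, hsymm]
  ring

/-- the consistent discrete potential vorticity conservation law.
If (i) the discrete potential vorticity relation
`∫_Ω γ q h = -∫_Ω ∇⊥γ·u + ∫_Ω γ f` holds for all `γ ∈ V₀`, and (ii) the discrete
momentum equation `∫_Ω w·u_t + ∫_Ω q w·F⊥ - ∫_Ω (∇·w)(gh + ½|u|²) = 0` holds for
all `w ∈ V₁`, with `∇⊥V₀ ⊆ V₁`, then `∫_Ω γ ((qh)_t + ∇·(qF)) = 0` for all
`γ ∈ V₀` and all `t`: the Galerkin projection of `(qh)_t + ∇·(qhu) = 0` onto `V₀`. -/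
theorem discrete_pv_conservation_law
    (L₁ L₂ : ℝ) (hL₁ : 0 < L₁) (hL₂ : 0 < L₂)
    (Ω : Set (ℝ × ℝ)) (hΩ : Ω = Set.Icc (0 : ℝ) L₁ ×ˢ Set.Icc (0 : ℝ) L₂)
    (V₀ : Set (ℝ × ℝ → ℝ)) (V₁ : Set (ℝ × ℝ → ℝ × ℝ))
    (hV₀ : ∀ γ ∈ V₀, ContDiff ℝ (⊤ : ℕ∞) γ ∧ Per2 L₁ L₂ γ)
    (hV₁ : ∀ w ∈ V₁, ContDiff ℝ (⊤ : ℕ∞) w ∧ Per2 L₁ L₂ w)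
    (hgradperp : ∀ γ ∈ V₀, perpGrad γ ∈ V₁)
    (f : ℝ × ℝ → ℝ) (hf : ContDiff ℝ (⊤ : ℕ∞) f) (hfper : Per2 L₁ L₂ f)
    (g : ℝ)
    (u F : ℝ → ℝ × ℝ → ℝ × ℝ) (h q : ℝ → ℝ × ℝ → ℝ)
    (hus : ContDiff ℝ (⊤ : ℕ∞) (fun z : ℝ × (ℝ × ℝ) => u z.1 z.2))
    (hFs : ContDiff ℝ (⊤ : ℕ∞) (fun z : ℝ × (ℝ × ℝ) => F z.1 z.2))
    (hhs : ContDiff ℝ (⊤ : ℕ∞) (fun z : ℝ × (ℝ × ℝ) => h z.1 z.2))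
    (hqs : ContDiff ℝ (⊤ : ℕ∞) (fun z : ℝ × (ℝ × ℝ) => q z.1 z.2))
    (huper : ∀ t, Per2 L₁ L₂ (u t)) (hFper : ∀ t, Per2 L₁ L₂ (F t))
    (hhper : ∀ t, Per2 L₁ L₂ (h t)) (hqper : ∀ t, Per2 L₁ L₂ (q t))
    (hpv : ∀ t : ℝ, ∀ γ ∈ V₀,
      ∫ p in Ω, γ p * (q t p * h t p) =
        -(∫ p in Ω, ((-(pdy γ p)) * (u t p).1 + pdx γ p * (u t p).2)) +
          ∫ p in Ω, γ p * f p)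
    (hmom : ∀ t : ℝ, ∀ w ∈ V₁,
      (∫ p in Ω, ((w p).1 * (deriv (fun s => (u s p).1) t) +
          (w p).2 * (deriv (fun s => (u s p).2) t))) +
        (∫ p in Ω, q t p * ((w p).1 * (-(F t p).2) + (w p).2 * (F t p).1)) -
        (∫ p in Ω, div2 w p *
          (g * h t p + ((u t p).1 ^ 2 + (u t p).2 ^ 2) / 2)) = 0) :
    ∀ γ ∈ V₀, ∀ t : ℝ,
      ∫ p in Ω, γ p * (deriv (fun s => q s p * h s p) t +
        (pdx (fun r => q t r * (F t r).1) p +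
          pdy (fun r => q t r * (F t r).2) p)) = 0 := by
  subst hΩ
  intro γ hγV t
  obtain ⟨hγ, hγper⟩ := hV₀ γ hγV
  set S := Set.Icc (0 : ℝ) L₁ ×ˢ Set.Icc (0 : ℝ) L₂ with hS
  have hK : IsCompact S := isCompact_Icc.prod isCompact_Icc
  have hIntS : ∀ {φ : ℝ × ℝ → ℝ}, Continuous φ → IntegrableOn φ S :=
    fun hc => hc.continuousOn.integrableOn_compact hK
  -- joint smoothness of relevant functions
  have hGqh : ContDiff ℝ (⊤ : ℕ∞) (fun z : ℝ × (ℝ × ℝ) => q z.1 z.2 * h z.1 z.2) := hqs.mul hhs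
  have hGu1 : ContDiff ℝ (⊤ : ℕ∞) (fun z : ℝ × (ℝ × ℝ) => (u z.1 z.2).1) := hus.fst
  have hGu2 : ContDiff ℝ (⊤ : ℕ∞) (fun z : ℝ × (ℝ × ℝ) => (u z.1 z.2).2) := hus.snd
  -- slices in time: rewriting `deriv` as a joint `fderiv`
  have hQd : ∀ (t' : ℝ) (p : ℝ × ℝ),
      deriv (fun s => q s p * h s p) t' =
        fderiv ℝ (fun z : ℝ × (ℝ × ℝ) => q z.1 z.2 * h z.1 z.2) (t', p) (1, 0) :=
    fun t' p => (slice_t (hGqh.differentiable (by simp)) t' p).deriv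
  have hU1d : ∀ (t' : ℝ) (p : ℝ × ℝ),
      deriv (fun s => (u s p).1) t' =
        fderiv ℝ (fun z : ℝ × (ℝ × ℝ) => (u z.1 z.2).1) (t', p) (1, 0) :=
    fun t' p => (slice_t (hGu1.differentiable (by simp)) t' p).deriv
  have hU2d : ∀ (t' : ℝ) (p : ℝ × ℝ),
      deriv (fun s => (u s p).2) t' =
        fderiv ℝ (fun z : ℝ × (ℝ × ℝ) => (u z.1 z.2).2) (t', p) (1, 0) :=
    fun t' p => (slice_t (hGu2.differentiable (by simp)) t' p).deriv
  -- Step B : differentiate the discrete PV relation in time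
  have hpdxγs : ContDiff ℝ (⊤ : ℕ∞) (pdx γ) := (hγ.fderiv_right (by simp)).clm_apply contDiff_const
  have hpdyγs : ContDiff ℝ (⊤ : ℕ∞) (pdy γ) := (hγ.fderiv_right (by simp)).clm_apply contDiff_const
  have hD1 : HasDerivAt (fun t' => ∫ p in S, γ p * (q t' p * h t' p))
      (∫ p in S, γ p *
        fderiv ℝ (fun z : ℝ × (ℝ × ℝ) => q z.1 z.2 * h z.1 z.2) (t, p) (1, 0)) t := by
    have hGγ : ContDiff ℝ (⊤ : ℕ∞) (fun z : ℝ × (ℝ × ℝ) => γ z.2 * (q z.1 z.2 * h z.1 z.2)) :=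
      (hγ.comp contDiff_snd).mul hGqh
    have h0 := hasDerivAt_intK hK hGγ t
    have heq : ∀ p : ℝ × ℝ,
        fderiv ℝ (fun z : ℝ × (ℝ × ℝ) => γ z.2 * (q z.1 z.2 * h z.1 z.2)) (t, p) (1, 0) =
          γ p * fderiv ℝ (fun z : ℝ × (ℝ × ℝ) => q z.1 z.2 * h z.1 z.2) (t, p) (1, 0) :=
      fun p => (slice_t (hGγ.differentiable (by simp)) t p).unique
        (HasDerivAt.const_mul (γ p) (slice_t (hGqh.differentiable (by simp)) t p))
    have h1 : (∫ p in S,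
        fderiv ℝ (fun z : ℝ × (ℝ × ℝ) => γ z.2 * (q z.1 z.2 * h z.1 z.2)) (t, p) (1, 0)) =
        ∫ p in S, γ p *
          fderiv ℝ (fun z : ℝ × (ℝ × ℝ) => q z.1 z.2 * h z.1 z.2) (t, p) (1, 0) :=
      integral_congr_ae (Filter.Eventually.of_forall heq)
    exact h1 ▸ h0
  have hD2 : HasDerivAt
      (fun t' => -(∫ p in S, ((-(pdy γ p)) * (u t' p).1 + pdx γ p * (u t' p).2)) +
        ∫ p in S, γ p * f p)
      (-(∫ p in S, ((-(pdy γ p)) *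
          fderiv ℝ (fun z : ℝ × (ℝ × ℝ) => (u z.1 z.2).1) (t, p) (1, 0) +
        pdx γ p * fderiv ℝ (fun z : ℝ × (ℝ × ℝ) => (u z.1 z.2).2) (t, p) (1, 0)))) t := by
    have hG2 : ContDiff ℝ (⊤ : ℕ∞) (fun z : ℝ × (ℝ × ℝ) =>
        (-(pdy γ z.2)) * (u z.1 z.2).1 + pdx γ z.2 * (u z.1 z.2).2) :=
      (((hpdyγs.comp contDiff_snd).neg).mul hGu1).add ((hpdxγs.comp contDiff_snd).mul hGu2)
    have h0 := hasDerivAt_intK hK hG2 t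
    have heq : ∀ p : ℝ × ℝ,
        fderiv ℝ (fun z : ℝ × (ℝ × ℝ) =>
          (-(pdy γ z.2)) * (u z.1 z.2).1 + pdx γ z.2 * (u z.1 z.2).2) (t, p) (1, 0) =
        (-(pdy γ p)) * fderiv ℝ (fun z : ℝ × (ℝ × ℝ) => (u z.1 z.2).1) (t, p) (1, 0) +
          pdx γ p * fderiv ℝ (fun z : ℝ × (ℝ × ℝ) => (u z.1 z.2).2) (t, p) (1, 0) :=
      fun p => (slice_t (hG2.differentiable (by simp)) t p).unique
        ((HasDerivAt.const_mul (-(pdy γ p)) (slice_t (hGu1.differentiable (by simp)) t p)).add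
          (HasDerivAt.const_mul (pdx γ p) (slice_t (hGu2.differentiable (by simp)) t p)))
    have h1 : (∫ p in S, fderiv ℝ (fun z : ℝ × (ℝ × ℝ) =>
          (-(pdy γ z.2)) * (u z.1 z.2).1 + pdx γ z.2 * (u z.1 z.2).2) (t, p) (1, 0)) =
        ∫ p in S, ((-(pdy γ p)) *
            fderiv ℝ (fun z : ℝ × (ℝ × ℝ) => (u z.1 z.2).1) (t, p) (1, 0) +
          pdx γ p * fderiv ℝ (fun z : ℝ × (ℝ × ℝ) => (u z.1 z.2).2) (t, p) (1, 0)) :=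
      integral_congr_ae (Filter.Eventually.of_forall heq)
    exact ((h1 ▸ h0).neg).add_const _
  have hD2' : HasDerivAt (fun t' => ∫ p in S, γ p * (q t' p * h t' p))
      (-(∫ p in S, ((-(pdy γ p)) *
          fderiv ℝ (fun z : ℝ × (ℝ × ℝ) => (u z.1 z.2).1) (t, p) (1, 0) +
        pdx γ p * fderiv ℝ (fun z : ℝ × (ℝ × ℝ) => (u z.1 z.2).2) (t, p) (1, 0)))) t :=
    hD2.congr_of_eventuallyEq (Filter.Eventually.of_forall fun t' => hpv t' γ hγV)
  have hEq1 := hD1.unique hD2'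
  -- Step C : use the momentum equation with w = perpGrad γ
  have hmom' := hmom t (perpGrad γ) (hgradperp γ hγV)
  have e3 : (∫ p in S, div2 (perpGrad γ) p *
      (g * h t p + ((u t p).1 ^ 2 + (u t p).2 ^ 2) / 2)) = 0 := by
    simp [div2_perpGrad hγ]
  have e1 : (∫ p in S, ((perpGrad γ p).1 * (deriv (fun s => (u s p).1) t) +
      (perpGrad γ p).2 * (deriv (fun s => (u s p).2) t))) =
      ∫ p in S, ((-(pdy γ p)) *
          fderiv ℝ (fun z : ℝ × (ℝ × ℝ) => (u z.1 z.2).1) (t, p) (1, 0) +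
        pdx γ p * fderiv ℝ (fun z : ℝ × (ℝ × ℝ) => (u z.1 z.2).2) (t, p) (1, 0)) :=
    integral_congr_ae (Filter.Eventually.of_forall fun p => by
      simp only [hU1d, hU2d]; rfl)
  have e2 : (∫ p in S, q t p * ((perpGrad γ p).1 * (-(F t p).2) +
      (perpGrad γ p).2 * (F t p).1)) =
      ∫ p in S, (pdx γ p * (q t p * (F t p).1) + pdy γ p * (q t p * (F t p).2)) :=
    integral_congr_ae (Filter.Eventually.of_forall fun p => by
      show q t p * ((-(pdy γ p)) * (-(F t p).2) + pdx γ p * (F t p).1) = _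
      ring)
  rw [e1, e2, e3, sub_zero] at hmom'
  -- combine : ∫ γ ∂ₜ(qh) = ∫ (∇γ · qF)
  have hEq2 : (∫ p in S, γ p *
      fderiv ℝ (fun z : ℝ × (ℝ × ℝ) => q z.1 z.2 * h z.1 z.2) (t, p) (1, 0)) =
      ∫ p in S, (pdx γ p * (q t p * (F t p).1) + pdy γ p * (q t p * (F t p).2)) := by
    linarith [hEq1, hmom']
  -- Step D : integration by parts in space
  have hqt : ContDiff ℝ (⊤ : ℕ∞) (fun p => q t p) :=
    hqs.comp ((contDiff_const (c := t)).prodMk contDiff_id)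
  have hFt : ContDiff ℝ (⊤ : ℕ∞) (fun p => F t p) :=
    hFs.comp ((contDiff_const (c := t)).prodMk contDiff_id)
  have hψ₁s : ContDiff ℝ (⊤ : ℕ∞) (fun r => q t r * (F t r).1) := hqt.mul hFt.fst
  have hψ₂s : ContDiff ℝ (⊤ : ℕ∞) (fun r => q t r * (F t r).2) := hqt.mul hFt.snd
  have hψ₁per : Per2 L₁ L₂ (fun r => q t r * (F t r).1) := by
    intro p
    constructor
    · show q t (p.1 + L₁, p.2) * (F t (p.1 + L₁, p.2)).1 = q t p * (F t p).1
      rw [(hqper t p).1, (hFper t p).1]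
    · show q t (p.1, p.2 + L₂) * (F t (p.1, p.2 + L₂)).1 = q t p * (F t p).1
      rw [(hqper t p).2, (hFper t p).2]
  have hψ₂per : Per2 L₁ L₂ (fun r => q t r * (F t r).2) := by
    intro p
    constructor
    · show q t (p.1 + L₁, p.2) * (F t (p.1 + L₁, p.2)).2 = q t p * (F t p).2
      rw [(hqper t p).1, (hFper t p).1]
    · show q t (p.1, p.2 + L₂) * (F t (p.1, p.2 + L₂)).2 = q t p * (F t p).2
      rw [(hqper t p).2, (hFper t p).2]
  have hprod1per : Per2 L₁ L₂ (fun r => γ r * (q t r * (F t r).1)) := by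
    intro p
    constructor
    · show γ (p.1 + L₁, p.2) * (q t (p.1 + L₁, p.2) * (F t (p.1 + L₁, p.2)).1) = _
      rw [(hγper p).1, (hqper t p).1, (hFper t p).1]
    · show γ (p.1, p.2 + L₂) * (q t (p.1, p.2 + L₂) * (F t (p.1, p.2 + L₂)).1) = _
      rw [(hγper p).2, (hqper t p).2, (hFper t p).2]
  have hprod2per : Per2 L₁ L₂ (fun r => γ r * (q t r * (F t r).2)) := by
    intro p
    constructor
    · show γ (p.1 + L₁, p.2) * (q t (p.1 + L₁, p.2) * (F t (p.1 + L₁, p.2)).2) = _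
      rw [(hγper p).1, (hqper t p).1, (hFper t p).1]
    · show γ (p.1, p.2 + L₂) * (q t (p.1, p.2 + L₂) * (F t (p.1, p.2 + L₂)).2) = _
      rw [(hγper p).2, (hqper t p).2, (hFper t p).2]
  have hz1 := integral_pdx_zero hL₁ hL₂ (hγ.mul hψ₁s) hprod1per
  have hz2 := integral_pdy_zero hL₁ hL₂ (hγ.mul hψ₂s) hprod2per
  have hz1' : (∫ p in S, (pdx γ p * (q t p * (F t p).1) +
      γ p * pdx (fun r => q t r * (F t r).1) p)) = 0 := by
    rw [← hz1]
    exact integral_congr_ae (Filter.Eventually.of_forall fun p =>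
      (pdx_mul (hγ.differentiable (by simp)) (hψ₁s.differentiable (by simp)) p).symm)
  have hz2' : (∫ p in S, (pdy γ p * (q t p * (F t p).2) +
      γ p * pdy (fun r => q t r * (F t r).2) p)) = 0 := by
    rw [← hz2]
    exact integral_congr_ae (Filter.Eventually.of_forall fun p =>
      (pdy_mul (hγ.differentiable (by simp)) (hψ₂s.differentiable (by simp)) p).symm)
  -- continuity facts for splitting integrals
  have cγ : Continuous γ := hγ.continuous
  have cpdxγ : Continuous (pdx γ) := cont_pdv hγ (1, 0)
  have cpdyγ : Continuous (pdy γ) := cont_pdv hγ (0, 1)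
  have cψ₁ : Continuous (fun r => q t r * (F t r).1) := hψ₁s.continuous
  have cψ₂ : Continuous (fun r => q t r * (F t r).2) := hψ₂s.continuous
  have cpdxψ₁ : Continuous (pdx (fun r => q t r * (F t r).1)) := cont_pdv hψ₁s (1, 0)
  have cpdyψ₂ : Continuous (pdy (fun r => q t r * (F t r).2)) := cont_pdv hψ₂s (0, 1)
  have cQt : Continuous (fun p : ℝ × ℝ =>
      fderiv ℝ (fun z : ℝ × (ℝ × ℝ) => q z.1 z.2 * h z.1 z.2) (t, p) (1, 0)) :=
    ((hGqh.continuous_fderiv (by simp)).clm_apply continuous_const).comp (Continuous.prodMk_right t)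
  have hsplit1 := integral_add (μ := volume.restrict S)
    (hIntS (cpdxγ.mul cψ₁)) (hIntS (cγ.mul cpdxψ₁))
  have hsplit2 := integral_add (μ := volume.restrict S)
    (hIntS (cpdyγ.mul cψ₂)) (hIntS (cγ.mul cpdyψ₂))
  have hsplit3 := integral_add (μ := volume.restrict S)
    (hIntS (cpdxγ.mul cψ₁)) (hIntS (cpdyγ.mul cψ₂))
  -- Step E : conclude
  have hgoal : (∫ p in S, γ p * (deriv (fun s => q s p * h s p) t +
      (pdx (fun r => q t r * (F t r).1) p + pdy (fun r => q t r * (F t r).2) p))) =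
      ∫ p in S, (γ p *
          fderiv ℝ (fun z : ℝ × (ℝ × ℝ) => q z.1 z.2 * h z.1 z.2) (t, p) (1, 0) +
        (γ p * pdx (fun r => q t r * (F t r).1) p +
         γ p * pdy (fun r => q t r * (F t r).2) p)) :=
    integral_congr_ae (Filter.Eventually.of_forall fun p => by
      simp only [hQd]; ring)
  have hsplitA : (∫ p in S, (γ p *
          fderiv ℝ (fun z : ℝ × (ℝ × ℝ) => q z.1 z.2 * h z.1 z.2) (t, p) (1, 0) +
        (γ p * pdx (fun r => q t r * (F t r).1) p +
         γ p * pdy (fun r => q t r * (F t r).2) p))) =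
      (∫ p in S, γ p *
          fderiv ℝ (fun z : ℝ × (ℝ × ℝ) => q z.1 z.2 * h z.1 z.2) (t, p) (1, 0)) +
      ∫ p in S, (γ p * pdx (fun r => q t r * (F t r).1) p +
         γ p * pdy (fun r => q t r * (F t r).2) p) :=
    integral_add (hIntS (cγ.mul cQt))
      ((hIntS (cγ.mul cpdxψ₁)).add (hIntS (cγ.mul cpdyψ₂)))
  have hsplitB : (∫ p in S, (γ p * pdx (fun r => q t r * (F t r).1) p +
         γ p * pdy (fun r => q t r * (F t r).2) p)) =
      (∫ p in S, γ p * pdx (fun r => q t r * (F t r).1) p) +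
      ∫ p in S, γ p * pdy (fun r => q t r * (F t r).2) p :=
    integral_add (hIntS (cγ.mul cpdxψ₁)) (hIntS (cγ.mul cpdyψ₂))
  rw [hgoal]
  simp only [Pi.mul_apply] at hsplit1 hsplit2 hsplit3
  linarith [hsplitA, hsplitB, hEq2, hz1', hz2', hsplit1, hsplit2, hsplit3]
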